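/- arXiv:1207.3619 — 2 statements merged into one kernel-verified Lean document; each statement's English description precedes it below -/
import Mathlib

section
/- Let N ≥ 1, let V ⊆ ℝ^N be a j-dimensional linear subspace (0 ≤ j ≤ N), and let t₀ ∈ ℝ. With respect to the parabolic metric d on ℝ^N × ℝ, the Hausdorff dimension of V × {t₀} equals j, and the Hausdorff dimension of V × ℝ equals j + 2. -/
/-!
Spatial and temporal directions scale differently: a parabolic ball of radius `r` is a Euclidean
ball of radius `r` times a time interval of length `2r²`, so Lebesgue measure gives it mass
`≍ r^(j+2)`, and the mass distribution principle bounds `dim (ℝ^j × ℝ)` from below by `j + 2`.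
Conversely, the parabolic dilation by `1/m` cuts the unit box into `m^j · m²` copies of itself of
diameter `O(1/m)`, so its `(j+2)`-dimensional Hausdorff measure is finite. A linear isometry
`ℝ^j ≃ V` carries `ℝ^j × ℝ` isometrically onto `V × ℝ`, and `V × {t₀}` is isometric to `ℝ^j`.
-/

open scoped ENNReal

noncomputable section

/-- Spacetime `ℝ^N × ℝ` equipped with the parabolic metric
`d((x,t),(y,s)) = max (‖x-y‖, |t-s|^{1/2})`. -/
def ParSpace (N : ℕ) : Type := EuclideanSpace ℝ (Fin N) × ℝ

namespace ParSpace

variable {N : ℕ}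

theorem sqrt_subadd (a b : ℝ) (ha : 0 ≤ a) (hb : 0 ≤ b) :
    Real.sqrt (a + b) ≤ Real.sqrt a + Real.sqrt b := by
  have h1 := Real.sq_sqrt ha
  have h2 := Real.sq_sqrt hb
  have h3 := Real.sqrt_nonneg a
  have h4 := Real.sqrt_nonneg b
  rw [show a + b = (Real.sqrt a)^2 + (Real.sqrt b)^2 by rw [h1, h2]]
  have h : (Real.sqrt a)^2 + (Real.sqrt b)^2 ≤ (Real.sqrt a + Real.sqrt b)^2 := by nlinarith
  calc Real.sqrt ((Real.sqrt a)^2 + (Real.sqrt b)^2)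
      ≤ Real.sqrt ((Real.sqrt a + Real.sqrt b)^2) := Real.sqrt_le_sqrt h
    _ = Real.sqrt a + Real.sqrt b := Real.sqrt_sq (by positivity)

instance : MetricSpace (ParSpace N) where
  dist X Y := max ‖X.1 - Y.1‖ (Real.sqrt |X.2 - Y.2|)
  dist_self X := by
    show max ‖X.1 - X.1‖ (Real.sqrt |X.2 - X.2|) = 0
    simp
  dist_comm X Y := by
    show max ‖X.1 - Y.1‖ (Real.sqrt |X.2 - Y.2|) = max ‖Y.1 - X.1‖ (Real.sqrt |Y.2 - X.2|)
    rw [norm_sub_rev, abs_sub_comm]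
  dist_triangle X Y Z := by
    show max ‖X.1 - Z.1‖ (Real.sqrt |X.2 - Z.2|) ≤
      max ‖X.1 - Y.1‖ (Real.sqrt |X.2 - Y.2|) + max ‖Y.1 - Z.1‖ (Real.sqrt |Y.2 - Z.2|)
    apply max_le
    · calc ‖X.1 - Z.1‖ ≤ ‖X.1 - Y.1‖ + ‖Y.1 - Z.1‖ := norm_sub_le_norm_sub_add_norm_sub _ _ _
        _ ≤ _ := add_le_add (le_max_left _ _) (le_max_left _ _)
    · calc Real.sqrt |X.2 - Z.2|
          ≤ Real.sqrt (|X.2 - Y.2| + |Y.2 - Z.2|) :=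
            Real.sqrt_le_sqrt (abs_sub_le _ _ _)
        _ ≤ Real.sqrt |X.2 - Y.2| + Real.sqrt |Y.2 - Z.2| :=
            sqrt_subadd _ _ (abs_nonneg _) (abs_nonneg _)
        _ ≤ _ := add_le_add (le_max_right _ _) (le_max_right _ _)
  eq_of_dist_eq_zero := by
    intro X Y h
    have h' : max ‖X.1 - Y.1‖ (Real.sqrt |X.2 - Y.2|) = 0 := h
    have h1 : ‖X.1 - Y.1‖ = 0 := le_antisymm (h' ▸ le_max_left _ _) (norm_nonneg _)
    have h2 : Real.sqrt |X.2 - Y.2| = 0 :=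
      le_antisymm (h' ▸ le_max_right _ _) (Real.sqrt_nonneg _)
    have hx : X.1 = Y.1 := sub_eq_zero.mp (norm_eq_zero.mp h1)
    have ht : X.2 = Y.2 := by
      have := (Real.sqrt_eq_zero (abs_nonneg _)).mp h2
      exact sub_eq_zero.mp (abs_eq_zero.mp this)
    exact Prod.ext hx ht

instance : MeasurableSpace (ParSpace N) := borel _
instance : BorelSpace (ParSpace N) := ⟨rfl⟩

/-- The spacetime origin. -/
def origin (N : ℕ) : ParSpace N := ((0 : EuclideanSpace ℝ (Fin N)), (0 : ℝ))

end ParSpace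
end

open MeasureTheory Metric Set Filter
open scoped NNReal Topology

theorem exists_fin_sub_mem_Icc {m : ℕ} (hm : 0 < m) {x : ℝ} (hx : x ∈ Icc (0 : ℝ) 1) :
    ∃ i : Fin m, m * x - i ∈ Icc (0 : ℝ) 1 := by
  have hmx : 0 ≤ m * x := mul_nonneg m.cast_nonneg hx.1
  by_cases hlt : ⌊m * x⌋₊ < m
  · exact ⟨⟨_, hlt⟩, sub_nonneg.2 (Nat.floor_le hmx),
      by linarith [Nat.lt_floor_add_one (m * x)]⟩
  · have hfloor : (m : ℝ) ≤ m * x := (Nat.cast_le.2 (not_lt.1 hlt)).trans (Nat.floor_le hmx)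
    refine ⟨⟨m - 1, Nat.sub_lt hm one_pos⟩, ?_⟩
    have hx1 : m * x ≤ m := mul_le_of_le_one_right m.cast_nonneg hx.2
    rw [Nat.cast_pred hm, mem_Icc]
    constructor <;> linarith

theorem le_dimH_of_measure_closedBall_le {X : Type*} [MetricSpace X] [MeasurableSpace X]
    [BorelSpace X] (μ : Measure X) {d : ℝ≥0} {C : ℝ≥0∞} (hC : C ≠ ⊤)
    (hball : ∀ x r, 0 ≤ r → μ (closedBall x r) ≤ C * ENNReal.ofReal r ^ (d : ℝ))
    {s : Set X} (hs : μ s ≠ 0) : (d : ℝ≥0∞) ≤ dimH s := by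
  have hμ : C⁻¹ • μ ≤ μH[d] := by
    refine Measure.le_hausdorffMeasure d _ 1 one_pos fun t ht => ?_
    rcases t.eq_empty_or_nonempty with rfl | ⟨x, hx⟩
    · simp
    have hbdd : Bornology.IsBounded t :=
      isBounded_iff_ediam_ne_top.2 (ht.trans_lt ENNReal.one_lt_top).ne
    have hsub : t ⊆ closedBall x (diam t) := fun y hy => dist_le_diam_of_mem hbdd hy hx
    calc (C⁻¹ • μ) t = C⁻¹ * μ t := rfl
      _ ≤ C⁻¹ * (C * ENNReal.ofReal (diam t) ^ (d : ℝ)) :=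
        mul_le_mul_right ((measure_mono hsub).trans (hball x _ diam_nonneg)) _
      _ ≤ ENNReal.ofReal (diam t) ^ (d : ℝ) := by
        rcases eq_or_ne C 0 with rfl | hC₀
        · simp
        · rw [ENNReal.inv_mul_cancel_left hC₀ hC]
      _ = ediam t ^ (d : ℝ) := by rw [diam, ENNReal.ofReal_toReal hbdd.ediam_ne_top]
  refine le_dimH_of_hausdorffMeasure_ne_zero fun h => ?_
  have : C⁻¹ * μ s = 0 := le_antisymm (h ▸ hμ s) zero_le
  exact (mul_eq_zero.1 this).elim (ENNReal.inv_ne_zero.2 hC) hs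

theorem Submodule.exists_linearIsometry_range_eq {E : Type*} [NormedAddCommGroup E]
    [InnerProductSpace ℝ E] (V : Submodule ℝ E) [FiniteDimensional ℝ V] {j : ℕ}
    (hV : Module.finrank ℝ V = j) :
    ∃ L : EuclideanSpace ℝ (Fin j) →ₗᵢ[ℝ] E, range L = V := by
  subst hV
  refine ⟨V.subtypeₗᵢ.comp (stdOrthonormalBasis ℝ V).repr.symm.toLinearIsometry, ?_⟩
  simp [LinearIsometry.coe_comp, range_comp,
    (stdOrthonormalBasis ℝ V).repr.symm.surjective.range_eq]

namespace ParSpace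

variable {m n : ℕ}

/-- A pair `(x, t) : E × ℝ` carries the product (sup) metric; `ofProd` retypes it as a point of
the parabolic space. -/
def ofProd (n : ℕ) (p : EuclideanSpace ℝ (Fin n) × ℝ) : ParSpace n := p

theorem dist_ofProd (p q : EuclideanSpace ℝ (Fin n) × ℝ) :
    dist (ofProd n p) (ofProd n q) = max ‖p.1 - q.1‖ √|p.2 - q.2| := rfl

theorem continuous_ofProd : Continuous (ofProd n) := by
  refine continuous_iff_continuousAt.2 fun p => tendsto_iff_dist_tendsto_zero.2 ?_
  have hcont : Continuous fun q : EuclideanSpace ℝ (Fin n) × ℝ =>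
      max ‖q.1 - p.1‖ √|q.2 - p.2| := by
    fun_prop
  simpa [dist_ofProd] using hcont.tendsto p

theorem isometry_prodMap (L : EuclideanSpace ℝ (Fin m) →ₗᵢ[ℝ] EuclideanSpace ℝ (Fin n)) :
    Isometry (fun X : ParSpace m => ofProd n (L X.1, X.2)) :=
  Isometry.of_dist_eq fun X Y => by
    rw [dist_ofProd, ← map_sub, L.norm_map]
    rfl

theorem isometry_timeSlice (t : ℝ) :
    Isometry (fun x : EuclideanSpace ℝ (Fin n) => ofProd n (x, t)) :=
  Isometry.of_dist_eq fun x y => by simp [dist_ofProd, dist_eq_norm]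

def dilate (r : ℝ≥0) (X : ParSpace n) : ParSpace n :=
  ofProd n ((r : ℝ) • X.1, (r : ℝ) ^ 2 * X.2)

theorem dist_dilate (r : ℝ≥0) (X Y : ParSpace n) :
    dist (dilate r X) (dilate r Y) = r * dist X Y := by
  obtain ⟨x, t⟩ := X
  obtain ⟨y, s⟩ := Y
  have hspace : ‖(r : ℝ) • x - (r : ℝ) • y‖ = r * ‖x - y‖ := by
    rw [← smul_sub, norm_smul, Real.norm_of_nonneg r.coe_nonneg]
  have htime : √|(r : ℝ) ^ 2 * t - (r : ℝ) ^ 2 * s| = r * √|t - s| := by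
    rw [← mul_sub, abs_mul, abs_of_nonneg (sq_nonneg _), Real.sqrt_mul (sq_nonneg _),
      Real.sqrt_sq r.coe_nonneg]
  dsimp only [dilate]
  rw [dist_ofProd, hspace, htime, ← mul_max_of_nonneg _ _ r.coe_nonneg]
  rfl

theorem lipschitzWith_dilate (r : ℝ≥0) : LipschitzWith r (dilate (n := n) r) :=
  LipschitzWith.of_dist_le_mul fun X Y => (dist_dilate r X Y).le

def translate (v : Fin n → ℝ) (τ : ℝ) (X : ParSpace n) : ParSpace n :=
  ofProd n (X.1 + WithLp.toLp 2 v, X.2 + τ)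

theorem isometry_translate (v : Fin n → ℝ) (τ : ℝ) : Isometry (translate v τ) :=
  Isometry.of_dist_eq fun X Y => by
    rw [translate, translate, dist_ofProd, add_sub_add_right_eq_sub, add_sub_add_right_eq_sub]
    rfl

theorem ofProd_preimage_closedBall (X : ParSpace n) {r : ℝ} (hr : 0 ≤ r) :
    ofProd n ⁻¹' closedBall X r = closedBall X.1 r ×ˢ Icc (X.2 - r ^ 2) (X.2 + r ^ 2) := by
  ext p
  change max ‖p.1 - X.1‖ √|p.2 - X.2| ≤ r ↔ _
  rw [max_le_iff, Real.sqrt_le_iff, abs_le, mem_prod, mem_closedBall, dist_eq_norm, mem_Icc]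
  constructor
  · rintro ⟨hx, -, ht₁, ht₂⟩
    exact ⟨hx, by linarith, by linarith⟩
  · rintro ⟨hx, ht₁, ht₂⟩
    exact ⟨hx, hr, by linarith, by linarith⟩

theorem map_volume_closedBall (X : ParSpace n) {r : ℝ} (hr : 0 ≤ r) :
    volume.map (ofProd n) (closedBall X r)
      = 2 * volume (ball (0 : EuclideanSpace ℝ (Fin n)) 1) * ENNReal.ofReal r ^ (n + 2) := by
  rw [Measure.map_apply continuous_ofProd.measurable measurableSet_closedBall,
    ofProd_preimage_closedBall X hr, Measure.volume_eq_prod, Measure.prod_prod,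
    Measure.addHaar_closedBall _ _ hr, Real.volume_Icc, finrank_euclideanSpace_fin,
    show X.2 + r ^ 2 - (X.2 - r ^ 2) = 2 * r ^ 2 by ring, ENNReal.ofReal_mul zero_le_two,
    ENNReal.ofReal_pow hr, ENNReal.ofReal_pow hr, ENNReal.ofReal_ofNat]
  ring

theorem natCast_add_two_le_dimH_univ : (n : ℝ≥0∞) + 2 ≤ dimH (univ : Set (ParSpace n)) := by
  have hball (X : ParSpace n) (r : ℝ) (hr : 0 ≤ r) :
      volume.map (ofProd n) (closedBall X r)
        ≤ 2 * volume (ball (0 : EuclideanSpace ℝ (Fin n)) 1)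
          * ENNReal.ofReal r ^ (((n + 2 : ℕ) : ℝ≥0) : ℝ) := by
    rw [NNReal.coe_natCast, ENNReal.rpow_natCast, map_volume_closedBall X hr]
  have hpos : volume.map (ofProd n) univ ≠ 0 := by
    rw [Measure.map_apply continuous_ofProd.measurable MeasurableSet.univ, preimage_univ]
    exact NeZero.ne _
  have hC : 2 * volume (ball (0 : EuclideanSpace ℝ (Fin n)) 1) ≠ ⊤ :=
    ENNReal.mul_ne_top ENNReal.ofNat_ne_top measure_ball_lt_top.ne
  simpa using le_dimH_of_measure_closedBall_le _ hC hball hpos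

def unitBox (n : ℕ) : Set (ParSpace n) :=
  {X | (∀ k, X.1 k ∈ Icc (0 : ℝ) 1) ∧ X.2 ∈ Icc (0 : ℝ) 1}

theorem isCompact_unitBox : IsCompact (unitBox n) := by
  have hcube : IsCompact {x : EuclideanSpace ℝ (Fin n) | ∀ k, x k ∈ Icc (0 : ℝ) 1} := by
    convert (EuclideanSpace.equiv (Fin n) ℝ).toHomeomorph.isCompact_preimage.2
      (isCompact_univ_pi fun _ => isCompact_Icc (a := (0 : ℝ)) (b := 1)) using 1
    ext x
    simp [Pi.le_def, forall_and]
  have hbox : unitBox n = ofProd n '' ({x | ∀ k, x k ∈ Icc (0 : ℝ) 1} ×ˢ Icc 0 1) := by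
    ext X
    exact ⟨fun hX => ⟨X, hX, rfl⟩, fun ⟨_, hX, hXeq⟩ => hXeq ▸ hX⟩
  rw [hbox]
  exact (hcube.prod isCompact_Icc).image continuous_ofProd

def cell (m : ℕ) (i : (Fin n → Fin m) × Fin (m ^ 2)) : Set (ParSpace n) :=
  dilate (m : ℝ≥0)⁻¹ '' (translate (fun k => (i.1 k : ℝ)) i.2 '' unitBox n)

theorem unitBox_subset_iUnion_cell {m : ℕ} (hm : 0 < m) : unitBox n ⊆ ⋃ i, cell m i := by
  rintro X ⟨hx, ht⟩
  choose a ha using fun k => exists_fin_sub_mem_Icc hm (hx k)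
  obtain ⟨b, hb⟩ := exists_fin_sub_mem_Icc (pow_pos hm 2) ht
  refine mem_iUnion.2 ⟨(a, b), ?_⟩
  rw [cell, image_image]
  refine ⟨ofProd n (WithLp.toLp 2 fun k => m * X.1 k - a k, (m : ℝ) ^ 2 * X.2 - b),
    ⟨ha, by rwa [Nat.cast_pow] at hb⟩, ?_⟩
  have hm' : (m : ℝ) ≠ 0 := by positivity
  refine Prod.ext ?_ ?_
  · ext k
    simp [dilate, translate, ofProd, hm', ← mul_add]
  · simp [dilate, translate, ofProd, hm']

theorem ediam_cell_le {m : ℕ} (hm : 0 < m) (i : (Fin n → Fin m) × Fin (m ^ 2)) :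
    ediam (cell m i) ≤ (m : ℝ≥0∞)⁻¹ * ediam (unitBox n) := by
  calc ediam (cell m i)
      ≤ ((m : ℝ≥0)⁻¹ : ℝ≥0) * ediam (translate (fun k => (i.1 k : ℝ)) i.2 '' unitBox n) :=
        (lipschitzWith_dilate _).ediam_image_le _
    _ = (m : ℝ≥0∞)⁻¹ * ediam (unitBox n) := by
        rw [(isometry_translate _ _).ediam_image, ENNReal.coe_inv (by positivity),
          ENNReal.coe_natCast]

theorem sum_ediam_cell_rpow_le {m : ℕ} (hm : 0 < m) :
    ∑ i, ediam (cell (n := n) m i) ^ ((n + 2 : ℕ) : ℝ) ≤ ediam (unitBox n) ^ (n + 2) := by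
  have hcard :
      (Fintype.card ((Fin n → Fin m) × Fin (m ^ 2)) : ℝ≥0∞) = (m : ℝ≥0∞) ^ (n + 2) := by
    simp only [Fintype.card_prod, Fintype.card_fun, Fintype.card_fin]
    push_cast
    ring
  calc ∑ i, ediam (cell m i) ^ ((n + 2 : ℕ) : ℝ)
      ≤ ∑ _i : (Fin n → Fin m) × Fin (m ^ 2), ((m : ℝ≥0∞)⁻¹ * ediam (unitBox n)) ^ (n + 2) :=
        Finset.sum_le_sum fun i _ => by
          rw [ENNReal.rpow_natCast]
          exact pow_le_pow_left₀ zero_le (ediam_cell_le hm i) _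
    _ = ((m : ℝ≥0∞) * (m : ℝ≥0∞)⁻¹) ^ (n + 2) * ediam (unitBox n) ^ (n + 2) := by
        rw [Finset.sum_const, Finset.card_univ, nsmul_eq_mul, hcard, mul_pow, mul_pow,
          mul_assoc]
    _ = ediam (unitBox n) ^ (n + 2) := by
        rw [ENNReal.mul_inv_cancel (by positivity) (ENNReal.natCast_ne_top _), one_pow, one_mul]

theorem hausdorffMeasure_unitBox_ne_top : μH[((n + 2 : ℕ) : ℝ)] (unitBox n) ≠ ⊤ := by
  have hD : ediam (unitBox n) ≠ ⊤ := isCompact_unitBox.isBounded.ediam_ne_top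
  have hr : Tendsto (fun k : ℕ => ((k + 1 : ℕ) : ℝ≥0∞)⁻¹ * ediam (unitBox n)) atTop (𝓝 0) := by
    simpa using ENNReal.Tendsto.mul_const
      (ENNReal.tendsto_inv_nat_nhds_zero.comp (tendsto_add_atTop_nat 1)) (Or.inr hD)
  refine ne_top_of_le_ne_top (ENNReal.pow_ne_top (n := n + 2) hD) ?_
  calc μH[((n + 2 : ℕ) : ℝ)] (unitBox n)
      ≤ liminf (fun k => ∑ i, ediam (cell (k + 1) i) ^ ((n + 2 : ℕ) : ℝ)) atTop :=
        Measure.hausdorffMeasure_le_liminf_sum _ _ _ hr (fun k => cell (k + 1))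
          (Eventually.of_forall fun k => ediam_cell_le k.succ_pos)
          (Eventually.of_forall fun k => unitBox_subset_iUnion_cell k.succ_pos)
    _ ≤ ediam (unitBox n) ^ (n + 2) :=
        (liminf_le_liminf (Eventually.of_forall fun k => sum_ediam_cell_rpow_le k.succ_pos)).trans
          (liminf_const _).le

theorem univ_eq_iUnion_translate_unitBox :
    (univ : Set (ParSpace n))
      = ⋃ a : (Fin n → ℤ) × ℤ, translate (fun k => (a.1 k : ℝ)) a.2 '' unitBox n := by
  refine (eq_univ_of_forall fun X : ParSpace n =>
    mem_iUnion.2 ⟨(fun k => ⌊X.1 k⌋, ⌊X.2⌋), ?_⟩).symm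
  refine ⟨ofProd n (WithLp.toLp 2 fun k => Int.fract (X.1 k), Int.fract X.2),
    ⟨fun k => ⟨Int.fract_nonneg _, (Int.fract_lt_one _).le⟩,
      Int.fract_nonneg _, (Int.fract_lt_one _).le⟩, ?_⟩
  refine Prod.ext ?_ ?_
  · ext k
    simp [translate, ofProd]
  · simp [translate, ofProd]

theorem dimH_univ : dimH (univ : Set (ParSpace n)) = n + 2 := by
  refine le_antisymm ?_ natCast_add_two_le_dimH_univ
  rw [univ_eq_iUnion_translate_unitBox, dimH_iUnion]
  refine iSup_le fun a => ?_
  rw [(isometry_translate _ _).dimH_image]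
  simpa using dimH_le_of_hausdorffMeasure_ne_top (d := ((n + 2 : ℕ) : ℝ≥0))
    (by simpa using hausdorffMeasure_unitBox_ne_top)

theorem dimH_fst_mem_range_snd_eq
    (L : EuclideanSpace ℝ (Fin m) →ₗᵢ[ℝ] EuclideanSpace ℝ (Fin n)) (t₀ : ℝ) :
    dimH {X : ParSpace n | X.1 ∈ range L ∧ X.2 = t₀} = m := by
  have hset : {X : ParSpace n | X.1 ∈ range L ∧ X.2 = t₀}
      = (fun y => ofProd n (L y, t₀)) '' univ := by
    ext X
    constructor
    · rintro ⟨⟨y, hy⟩, ht⟩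
      exact ⟨y, trivial, Prod.ext hy ht.symm⟩
    · rintro ⟨y, -, rfl⟩
      exact ⟨⟨y, rfl⟩, rfl⟩
  have hiso : Isometry fun y => ofProd n (L y, t₀) := (isometry_timeSlice t₀).comp L.isometry
  rw [hset, hiso.dimH_image, Real.dimH_univ_eq_finrank, finrank_euclideanSpace_fin]

theorem dimH_fst_mem_range (L : EuclideanSpace ℝ (Fin m) →ₗᵢ[ℝ] EuclideanSpace ℝ (Fin n)) :
    dimH {X : ParSpace n | X.1 ∈ range L} = m + 2 := by
  have hset : {X : ParSpace n | X.1 ∈ range L}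
      = (fun X : ParSpace m => ofProd n (L X.1, X.2)) '' univ := by
    ext X
    constructor
    · rintro ⟨y, hy⟩
      exact ⟨ofProd m (y, X.2), trivial, Prod.ext hy rfl⟩
    · rintro ⟨Y, -, rfl⟩
      exact ⟨Y.1, rfl⟩
  rw [hset, (isometry_prodMap L).dimH_image, dimH_univ]

end ParSpace

theorem parabolic_dimH_subspace_general (N j : ℕ)
    (V : Submodule ℝ (EuclideanSpace ℝ (Fin N))) (hV : Module.finrank ℝ V = j) (t₀ : ℝ) :
    dimH {X : ParSpace N | X.1 ∈ V ∧ X.2 = t₀} = (j : ℝ≥0∞) ∧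
    dimH {X : ParSpace N | X.1 ∈ V} = (j : ℝ≥0∞) + 2 := by
  obtain ⟨L, hL⟩ := V.exists_linearIsometry_range_eq hV
  simp only [← SetLike.mem_coe, ← hL]
  exact ⟨ParSpace.dimH_fst_mem_range_snd_eq L t₀, ParSpace.dimH_fst_mem_range L⟩

/-- With respect to the parabolic metric on `ℝ^N × ℝ`, a `j`-dimensional linear
subspace `V ⊆ ℝ^N` at a fixed time `t₀` has Hausdorff dimension `j`, and the
spacetime track `V × ℝ` has Hausdorff dimension `j + 2`. -/
theorem parabolic_dimH_subspace (N j : ℕ) (hN : 1 ≤ N) (hj : j ≤ N)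
    (V : Submodule ℝ (EuclideanSpace ℝ (Fin N))) (hV : Module.finrank ℝ V = j) (t₀ : ℝ) :
    dimH {X : ParSpace N | X.1 ∈ V ∧ X.2 = t₀} = (j : ℝ≥0∞) ∧
    dimH {X : ParSpace N | X.1 ∈ V} = (j : ℝ≥0∞) + 2 :=
  parabolic_dimH_subspace_general N j V hV t₀
end

section
/- (Cone-splitting principle for varifolds, measure form.) Let μ be a Borel measure on ℝ^N, let n ≥ 0 be a real number, and let V ⊆ ℝ^N be a linear subspace. Suppose μ is homogeneous of degree n about 0, μ is invariant under translation by every vector of V, and there exists y ∉ V such that μ is homogeneous of degree n about y. Then μ is invariant under translation by every vector of the linear span of V ∪ {y}, and μ is homogeneous of degree n about every point of the linear span of V ∪ {y}. -/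
/-!
Translation by `t • y` is the dilation by `(1 + t)⁻¹` about `y` followed by the dilation by
`1 + t` about `0`; for `t > -1` the two homogeneity factors cancel, so `μ` is invariant under
translation by `t • y`, hence (by inversion) by every multiple of `y`, and together with `V` by
every vector of `span (V ∪ {y})`. Moreover, the dilation by `l` about `z` is the dilation by `l`
about `0` followed by translation by `(1 - l) • z`, so homogeneity about `0` transfers to every
point `z` of that span.
-/

open MeasureTheory

/-- `μ` is homogeneous of degree `n` about the point `y`:
`μ(y + λ(A − y)) = λ^n μ(A)` for every Borel set `A` and every `λ > 0`. -/
def HomogeneousAbout {N : ℕ} (μ : Measure (EuclideanSpace ℝ (Fin N))) (n : ℝ)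
    (y : EuclideanSpace ℝ (Fin N)) : Prop :=
  ∀ A : Set (EuclideanSpace ℝ (Fin N)), MeasurableSet A → ∀ l : ℝ, 0 < l →
    μ ((fun x => y + l • (x - y)) '' A) = ENNReal.ofReal (l ^ n) * μ A

/-- `μ` is invariant under translation by the vector `w`. -/
def TranslationInvariantBy {N : ℕ} (μ : Measure (EuclideanSpace ℝ (Fin N)))
    (w : EuclideanSpace ℝ (Fin N)) : Prop :=
  ∀ A : Set (EuclideanSpace ℝ (Fin N)), MeasurableSet A → μ ((fun x => x + w) '' A) = μ A

section

variable {𝕜 E : Type*} [Field 𝕜] [AddCommGroup E] [Module 𝕜 E]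

lemma image_dilation_eq_preimage (y : E) {l : 𝕜} (hl : l ≠ 0) (A : Set E) :
    (fun x => y + l • (x - y)) '' A = (fun x => y + l⁻¹ • (x - y)) ⁻¹' A :=
  congrFun (Set.image_eq_preimage_of_inverse (fun x => by simp [smul_smul, hl])
    (fun x => by simp [smul_smul, hl])) A

variable [MeasurableSpace E] [MeasurableAdd E] [MeasurableSub E] [MeasurableConstSMul 𝕜 E]

lemma MeasurableSet.image_dilation (y : E) {l : 𝕜} (hl : l ≠ 0) {A : Set E}
    (hA : MeasurableSet A) : MeasurableSet ((fun x => y + l • (x - y)) '' A) := by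
  rw [image_dilation_eq_preimage y hl]
  exact hA.preimage (by fun_prop)

end

lemma MeasurableSet.image_add_const {G : Type*} [AddGroup G] [MeasurableSpace G] [MeasurableAdd G]
    (w : G) {A : Set G} (hA : MeasurableSet A) : MeasurableSet ((fun x => x + w) '' A) := by
  rw [Set.image_add_right]
  exact hA.preimage (measurable_add_const _)

lemma ENNReal.ofReal_rpow_mul_ofReal_inv_rpow {l : ℝ} (hl : 0 < l) (n : ℝ) :
    ENNReal.ofReal (l ^ n) * ENNReal.ofReal (l⁻¹ ^ n) = 1 := by
  rw [← ENNReal.ofReal_mul (by positivity), ← Real.mul_rpow hl.le (inv_nonneg.2 hl.le),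
    mul_inv_cancel₀ hl.ne', Real.one_rpow, ENNReal.ofReal_one]

section

variable {N : ℕ} {μ : Measure (EuclideanSpace ℝ (Fin N))} {n : ℝ}

local notation "ℝᴺ" => EuclideanSpace ℝ (Fin N)

namespace TranslationInvariantBy

lemma add {w₁ w₂ : ℝᴺ} (h₁ : TranslationInvariantBy μ w₁)
    (h₂ : TranslationInvariantBy μ w₂) : TranslationInvariantBy μ (w₁ + w₂) := by
  intro A hA
  rw [← h₁ A hA, ← h₂ _ (hA.image_add_const w₁), Set.image_image]
  simp only [add_assoc]

lemma neg {w : ℝᴺ} (h : TranslationInvariantBy μ w) : TranslationInvariantBy μ (-w) := by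
  intro A hA
  have := h _ (hA.image_add_const (-w))
  rw [Set.image_image] at this
  simpa using this.symm

end TranslationInvariantBy

namespace HomogeneousAbout

lemma translationInvariantBy_smul_of_neg_one_lt {y : ℝᴺ} (h₀ : HomogeneousAbout μ n 0)
    (hy : HomogeneousAbout μ n y) {t : ℝ} (ht : -1 < t) :
    TranslationInvariantBy μ (t • y) := by
  intro A hA
  have hl : 0 < 1 + t := by linarith
  have hcomp : (fun x => x + t • y) '' A = (fun x => 0 + (1 + t) • (x - 0)) ''
      ((fun x => y + (1 + t)⁻¹ • (x - y)) '' A) := by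
    rw [Set.image_image]
    refine congrArg (· '' A) (funext fun x => ?_)
    rw [sub_zero, zero_add, smul_add, smul_smul, mul_inv_cancel₀ hl.ne']
    module
  rw [hcomp, h₀ _ (hA.image_dilation y (inv_ne_zero hl.ne')) _ hl, hy A hA _ (inv_pos.2 hl),
    ← mul_assoc, ENNReal.ofReal_rpow_mul_ofReal_inv_rpow hl, one_mul]

lemma translationInvariantBy_smul {y : ℝᴺ} (h₀ : HomogeneousAbout μ n 0)
    (hy : HomogeneousAbout μ n y) (c : ℝ) : TranslationInvariantBy μ (c • y) := by
  rcases lt_or_ge (-1) c with hc | hc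
  · exact h₀.translationInvariantBy_smul_of_neg_one_lt hy hc
  · simpa using (h₀.translationInvariantBy_smul_of_neg_one_lt hy (t := -c) (by linarith)).neg

lemma of_translationInvariantBy_smul {z : ℝᴺ} (h₀ : HomogeneousAbout μ n 0)
    (hz : ∀ c : ℝ, TranslationInvariantBy μ (c • z)) : HomogeneousAbout μ n z := by
  intro A hA l hl
  have hcomp : (fun x => z + l • (x - z)) '' A =
      (fun x => x + (1 - l) • z) '' ((fun x => 0 + l • (x - 0)) '' A) := by
    rw [Set.image_image]
    refine congrArg (· '' A) (funext fun x => ?_)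
    module
  rw [hcomp, hz _ _ (hA.image_dilation 0 hl.ne'), h₀ A hA l hl]

end HomogeneousAbout

end

theorem cone_splitting_for_measures_general (N : ℕ) (μ : Measure (EuclideanSpace ℝ (Fin N)))
    (n : ℝ) (V : Submodule ℝ (EuclideanSpace ℝ (Fin N)))
    (y : EuclideanSpace ℝ (Fin N))
    (h0 : HomogeneousAbout μ n 0)
    (hV : ∀ w ∈ V, TranslationInvariantBy μ w)
    (hy' : HomogeneousAbout μ n y) :
    (∀ w ∈ Submodule.span ℝ (↑V ∪ {y} : Set (EuclideanSpace ℝ (Fin N))),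
      TranslationInvariantBy μ w) ∧
    (∀ z ∈ Submodule.span ℝ (↑V ∪ {y} : Set (EuclideanSpace ℝ (Fin N))),
      HomogeneousAbout μ n z) := by
  have hspan : ∀ w ∈ Submodule.span ℝ (↑V ∪ {y} : Set (EuclideanSpace ℝ (Fin N))),
      TranslationInvariantBy μ w := by
    intro w hw
    rw [Submodule.span_union, Submodule.span_eq] at hw
    obtain ⟨v, hv, u, hu, rfl⟩ := Submodule.mem_sup.mp hw
    obtain ⟨c, rfl⟩ := Submodule.mem_span_singleton.mp hu
    exact (hV v hv).add (h0.translationInvariantBy_smul hy' c)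
  exact ⟨hspan, fun z hz =>
    h0.of_translationInvariantBy_smul fun c => hspan _ (Submodule.smul_mem _ c hz)⟩

/-- Cone-splitting principle: if a Borel measure on `ℝ^N` is homogeneous of degree
`n` about `0`, invariant under translations by a subspace `V`, and homogeneous of
degree `n` about some point `y ∉ V`, then it is invariant under translations by
`span (V ∪ {y})` and homogeneous of degree `n` about every point of `span (V ∪ {y})`. -/
theorem cone_splitting_for_measures (N : ℕ) (μ : Measure (EuclideanSpace ℝ (Fin N)))
    (n : ℝ) (hn : 0 ≤ n) (V : Submodule ℝ (EuclideanSpace ℝ (Fin N)))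
    (y : EuclideanSpace ℝ (Fin N)) (hy : y ∉ V)
    (h0 : HomogeneousAbout μ n 0)
    (hV : ∀ w ∈ V, TranslationInvariantBy μ w)
    (hy' : HomogeneousAbout μ n y) :
    (∀ w ∈ Submodule.span ℝ (↑V ∪ {y} : Set (EuclideanSpace ℝ (Fin N))),
      TranslationInvariantBy μ w) ∧
    (∀ z ∈ Submodule.span ℝ (↑V ∪ {y} : Set (EuclideanSpace ℝ (Fin N))),
      HomogeneousAbout μ n z) :=
  cone_splitting_for_measures_general N μ n V y h0 hV hy'
end
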